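/- arXiv:1707.08656 — 5 statements merged into one kernel-verified Lean document; each statement's English description precedes it below -/
import Mathlib

section
/- Let G be a finite connected simple graph of order n ≥ 3 with s support vertices and ℓ pendant vertices, and let δ*(G) denote the minimum of deg(v) taken over all vertices v of G that are not pendant vertices. Then L₂(G) ≤ 2(n − ℓ + s·δ*(G))/(1 + δ*(G)). -/
/-!
Let `B` be a maximum 2-limited packing and `W` the set of non-pendant vertices, and count the
pairs `(b, v)` with `b ∈ B`, `v ∈ W ∩ N[b]`. Each `v ∈ W` lies in at most two of them. Each
`b ∈ B` lies in at least one, since in a connected graph with at least three vertices the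
neighbour of a pendant vertex is not pendant; and if `b` is neither pendant nor a support vertex
then `N[b] ⊆ W`, so it lies in at least `1 + δ*` of them. Finally at most `2s` vertices of `B`
are pendant or support vertices, as each lies in `N[u]` for a support vertex `u`.
-/

open Finset

/-- A set `B` is a `k`-limited packing in `G` if every closed neighbourhood
contains at most `k` vertices of `B`. -/
def SimpleGraph.IsLimitedPacking {V : Type*} [Fintype V] [DecidableEq V]
    (G : SimpleGraph V) [DecidableRel G.Adj] (k : ℕ) (B : Finset V) : Prop :=
  ∀ v : V, ((insert v (G.neighborFinset v)) ∩ B).card ≤ k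

/-- The `k`-limited packing number of `G`. -/
noncomputable def SimpleGraph.limitedPackingNumber {V : Type*} [Fintype V] [DecidableEq V]
    (G : SimpleGraph V) [DecidableRel G.Adj] (k : ℕ) : ℕ :=
  sSup {n : ℕ | ∃ B : Finset V, G.IsLimitedPacking k B ∧ B.card = n}

namespace SimpleGraph

variable {V : Type*} [Fintype V] [DecidableEq V] (G : SimpleGraph V) [DecidableRel G.Adj]

def nonpendantVertices : Finset V := {v | G.degree v ≠ 1}

def supportVertices : Finset V := {v | ∃ u, G.Adj v u ∧ G.degree u = 1}

lemma exists_isLimitedPacking_card_eq_limitedPackingNumber (k : ℕ) :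
    ∃ B : Finset V, G.IsLimitedPacking k B ∧ #B = G.limitedPackingNumber k :=
  Nat.sSup_mem (s := {n | ∃ B : Finset V, G.IsLimitedPacking k B ∧ #B = n})
    ⟨0, ∅, fun v => by simp, rfl⟩ ⟨Fintype.card V, fun _ ⟨B, _, hB⟩ => hB ▸ card_le_univ B⟩

variable {G}

lemma mem_insert_neighborFinset_comm {v w : V} :
    w ∈ insert v (G.neighborFinset v) ↔ v ∈ insert w (G.neighborFinset w) := by
  simp only [mem_insert, mem_neighborFinset]
  exact or_congr eq_comm (G.adj_comm _ _)

lemma sum_card_insert_neighborFinset_inter_comm (A B : Finset V) :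
    ∑ v ∈ A, #(insert v (G.neighborFinset v) ∩ B) =
      ∑ b ∈ B, #(insert b (G.neighborFinset b) ∩ A) := by
  simp only [fun X Y : Finset V => show #(X ∩ Y) = ∑ y ∈ Y, if y ∈ X then 1 else 0 by
    rw [inter_comm, ← filter_mem_eq_inter, card_filter]]
  rw [sum_comm]
  exact sum_congr rfl fun b _ => sum_congr rfl fun v _ =>
    if_congr mem_insert_neighborFinset_comm rfl rfl

namespace IsLimitedPacking

variable {k : ℕ} {B : Finset V}

lemma sum_card_inter_le (hB : G.IsLimitedPacking k B) (A : Finset V) :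
    ∑ v ∈ A, #(insert v (G.neighborFinset v) ∩ B) ≤ k * #A := by
  simpa [mul_comm] using sum_le_card_nsmul A _ k fun v _ => hB v

lemma card_le_mul_card_of_dominates (hB : G.IsLimitedPacking k B) {S T : Finset V} (hTB : T ⊆ B)
    (hT : ∀ b ∈ T, ∃ u ∈ S, b ∈ insert u (G.neighborFinset u)) : #T ≤ k * #S :=
  calc #T ≤ #(S.biUnion fun u => insert u (G.neighborFinset u) ∩ B) :=
        card_le_card fun b hb => by
          obtain ⟨u, hu, hbu⟩ := hT b hb
          exact mem_biUnion.2 ⟨u, hu, mem_inter.2 ⟨hbu, hTB hb⟩⟩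
    _ ≤ ∑ u ∈ S, #(insert u (G.neighborFinset u) ∩ B) := card_biUnion_le
    _ ≤ k * #S := hB.sum_card_inter_le S

end IsLimitedPacking

lemma Connected.degree_ne_one_of_adj_of_degree_eq_one (hG : G.Connected)
    (hn : 3 ≤ Fintype.card V) {b u : V} (hb : G.degree b = 1) (hbu : G.Adj b u) :
    G.degree u ≠ 1 := by
  intro hu
  obtain ⟨w, -, hw⟩ := exists_mem_notMem_of_card_lt_card (s := {b, u}) (t := univ)
    ((card_le_two).trans_lt (by rwa [card_univ]))
  obtain ⟨d, -, hd, hd'⟩ := (hG b w).some.exists_boundary_dart {b, u} (by simp) (by simpa using hw)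
  have only_adj {x y : V} (hx : G.degree x = 1) (hxy : G.Adj x y) : ∀ z, G.Adj x z → z = y :=
    fun z hz => (degree_eq_one_iff_existsUnique_adj.1 hx).unique hz hxy
  rcases hd with hd | hd
  · exact hd' (Or.inr (only_adj hb hbu _ (hd ▸ d.adj)))
  · exact hd' (Or.inl (only_adj hu hbu.symm _ (hd ▸ d.adj)))

lemma Connected.insert_neighborFinset_inter_nonpendantVertices_nonempty (hG : G.Connected)
    (hn : 3 ≤ Fintype.card V) (b : V) :
    (insert b (G.neighborFinset b) ∩ G.nonpendantVertices).Nonempty := by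
  by_cases hb : G.degree b = 1
  · obtain ⟨u, hbu, -⟩ := degree_eq_one_iff_existsUnique_adj.1 hb
    exact ⟨u, by simpa [nonpendantVertices, hbu] using
      hG.degree_ne_one_of_adj_of_degree_eq_one hn hb hbu⟩
  · exact ⟨b, by simpa [nonpendantVertices] using hb⟩

lemma card_insert_neighborFinset_inter_nonpendantVertices {b : V} (hb : G.degree b ≠ 1)
    (hb' : ∀ u, G.Adj b u → G.degree u ≠ 1) :
    #(insert b (G.neighborFinset b) ∩ G.nonpendantVertices) = G.degree b + 1 := by
  rw [inter_eq_left.2, card_insert_of_notMem (by simp), card_neighborFinset_eq_degree]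
  intro v hv
  rcases mem_insert.1 hv with rfl | hv
  · simpa [nonpendantVertices] using hb
  · simpa [nonpendantVertices] using hb' v ((mem_neighborFinset _ _ _).1 hv)

theorem IsLimitedPacking.one_add_mul_card_le (hG : G.Connected) (hn : 3 ≤ Fintype.card V)
    {k δ : ℕ} {B : Finset V} (hB : G.IsLimitedPacking k B)
    (hδ : ∀ v, G.degree v ≠ 1 → δ ≤ G.degree v) :
    (1 + δ) * #B ≤ k * #G.nonpendantVertices + k * #G.supportVertices * δ := by
  let f b := #(insert b (G.neighborFinset b) ∩ G.nonpendantVertices)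
  let T := B.filter fun b => G.degree b = 1 ∨ ∃ u, G.Adj b u ∧ G.degree u = 1
  let R := B.filter fun b => ¬(G.degree b = 1 ∨ ∃ u, G.Adj b u ∧ G.degree u = 1)
  have hT : #T ≤ k * #G.supportVertices :=
    hB.card_le_mul_card_of_dominates (filter_subset _ _) fun b hb => by
      rcases (mem_filter.1 hb).2 with hb | hb
      · obtain ⟨u, hbu, -⟩ := degree_eq_one_iff_existsUnique_adj.1 hb
        exact ⟨u, mem_filter.2 ⟨mem_univ _, b, hbu.symm, hb⟩,
          mem_insert_of_mem ((mem_neighborFinset _ _ _).2 hbu.symm)⟩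
      · exact ⟨b, mem_filter.2 ⟨mem_univ _, hb⟩, mem_insert_self _ _⟩
  have hf_T : #T ≤ ∑ b ∈ T, f b := by
    simpa using card_nsmul_le_sum T f 1 fun b _ =>
      card_pos.2 (hG.insert_neighborFinset_inter_nonpendantVertices_nonempty hn b)
  have hf_R : #R * (1 + δ) ≤ ∑ b ∈ R, f b := by
    refine smul_eq_mul #R (1 + δ) ▸ card_nsmul_le_sum R f _ fun b hb => ?_
    simp only [R, mem_filter, not_or, not_exists, not_and] at hb
    have := hδ b hb.2.1
    simp only [f, card_insert_neighborFinset_inter_nonpendantVertices hb.2.1 hb.2.2]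
    omega
  have hf_B : ∑ b ∈ B, f b ≤ k * #G.nonpendantVertices :=
    sum_card_insert_neighborFinset_inter_comm (G := G) _ B ▸ hB.sum_card_inter_le _
  have hTR : #T + #R = #B := card_filter_add_card_filter_not _
  have hsplit : ∑ b ∈ T, f b + ∑ b ∈ R, f b = ∑ b ∈ B, f b := sum_filter_add_sum_filter_not _ _ _
  calc (1 + δ) * #B = #T + #R * (1 + δ) + δ * #T := by rw [← hTR]; ring
    _ ≤ ∑ b ∈ T, f b + ∑ b ∈ R, f b + δ * (k * #G.supportVertices) := by gcongr
    _ ≤ k * #G.nonpendantVertices + k * #G.supportVertices * δ := by rw [hsplit]; linarith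

end SimpleGraph

/-- Upper bound on the 2-limited packing number of a connected graph of order `n ≥ 3`
in terms of the number of pendant vertices `ℓ`, the number of support vertices `s`,
and the minimum degree `δ*` over non-pendant vertices. -/
theorem two_limited_packing_upper_bound {V : Type*} [Fintype V] [DecidableEq V]
    (G : SimpleGraph V) [DecidableRel G.Adj]
    (hconn : G.Connected) (hn : 3 ≤ Fintype.card V)
    (s ℓ δstar : ℕ)
    (hs : s = (Finset.univ.filter (fun v : V => ∃ u, G.Adj v u ∧ G.degree u = 1)).card)
    (hℓ : ℓ = (Finset.univ.filter (fun v : V => G.degree v = 1)).card)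
    (hδ : δstar = sInf {d : ℕ | ∃ v : V, G.degree v ≠ 1 ∧ G.degree v = d}) :
    (G.limitedPackingNumber 2 : ℝ) ≤
      2 * ((Fintype.card V : ℝ) - ℓ + s * δstar) / (1 + δstar) := by
  obtain ⟨B, hB, hBcard⟩ := G.exists_isLimitedPacking_card_eq_limitedPackingNumber 2
  have hcount := hB.one_add_mul_card_le hconn hn (δ := δstar) fun v hv =>
    hδ ▸ Nat.sInf_le ⟨v, hv, rfl⟩
  rw [SimpleGraph.supportVertices, ← hs] at hcount
  have hcard : ℓ + #G.nonpendantVertices = Fintype.card V := by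
    rw [hℓ, SimpleGraph.nonpendantVertices, card_filter_add_card_filter_not, card_univ]
  rw [← hBcard, le_div_iff₀ (by positivity)]
  have hcount' : ((1 + δstar) * #B : ℝ) ≤ 2 * #G.nonpendantVertices + 2 * s * δstar := by
    exact_mod_cast hcount
  have hcard' : (ℓ + #G.nonpendantVertices : ℝ) = Fintype.card V := by exact_mod_cast hcard
  linarith
end

section
/- Let G be a finite simple graph of order n and size m, and let k be an integer with 1 ≤ k ≤ Δ(G) such that k ≤ 2(n − √(n² − n − 2m)) or δ(G) ≥ k − 1. Then L_k(G) = n + k/2 − √(k²/4 + (1 − k)n + 2m) if and only if there exists a clique S ⊆ V(G) such that the subgraph of G induced on V(G) ∖ S is (k − 1)-regular and every vertex of S has exactly k neighbours in V(G) ∖ S. -/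
/-!
Let `B` be a `k`-limited packing, `S` its complement and `s = |S|`. Summing `deg v + 1` over all
vertices gives `2m + n = Σ_{v ∈ B} |N[v] ∩ B| + 2 e(S, B) + Σ_{v ∈ S} |N[v] ∩ S|`, and the
packing condition bounds the three terms by `(n - s) k`, `s k` and `s²`. This rearranges to
`k²/4 + (1 - k) n + 2m ≤ (s + k/2)²`, i.e. `|B| ≤ n + k/2 - √(k²/4 + (1 - k) n + 2m)`. Equality
holds iff all three bounds are attained, which says precisely that `B` induces a
`(k - 1)`-regular graph, every vertex of `S` has `k` neighbours in `B` and `S` is a clique;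
conversely the complement of such a clique is a packing attaining the bound.
-/

open Finset

namespace SimpleGraph

variable {V : Type*} [Fintype V] [DecidableEq V] (G : SimpleGraph V) [DecidableRel G.Adj]

lemma bddAbove_setOf_isLimitedPacking_card (k : ℕ) :
    BddAbove {n : ℕ | ∃ B : Finset V, G.IsLimitedPacking k B ∧ #B = n} :=
  ⟨Fintype.card V, by rintro _ ⟨B, -, rfl⟩; exact card_le_univ B⟩

variable {G} in
lemma IsLimitedPacking.card_le_limitedPackingNumber {k : ℕ} {B : Finset V}
    (h : G.IsLimitedPacking k B) : #B ≤ G.limitedPackingNumber k :=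
  le_csSup (G.bddAbove_setOf_isLimitedPacking_card k) ⟨B, h, rfl⟩

lemma sum_card_neighborFinset_inter_comm (s t : Finset V) :
    ∑ v ∈ s, #(G.neighborFinset v ∩ t) = ∑ v ∈ t, #(G.neighborFinset v ∩ s) := by
  have h := sum_card_bipartiteAbove_eq_sum_card_bipartiteBelow (s := s) (t := t) (r := G.Adj)
  simp only [bipartiteAbove, bipartiteBelow] at h
  convert h using 3 with v - v -
  · ext; simp [and_comm]
  · ext; simp [and_comm, G.adj_comm v]

lemma two_mul_card_edgeFinset_add_card_eq (S : Finset V) :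
    2 * #G.edgeFinset + Fintype.card V =
      ∑ v ∈ Sᶜ, (#(G.neighborFinset v \ S) + 1) + 2 * ∑ v ∈ S, #(G.neighborFinset v \ S) +
        ∑ v ∈ S, (#(G.neighborFinset v ∩ S) + 1) := by
  have hdeg (v : V) : G.degree v = #(G.neighborFinset v \ S) + #(G.neighborFinset v ∩ S) := by
    rw [← card_neighborFinset_eq_degree, card_sdiff_add_card_inter]
  have hcross : ∑ v ∈ Sᶜ, #(G.neighborFinset v ∩ S) = ∑ v ∈ S, #(G.neighborFinset v \ S) := by
    simp only [sdiff_eq_inter_compl]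
    exact G.sum_card_neighborFinset_inter_comm _ _
  calc 2 * #G.edgeFinset + Fintype.card V = ∑ v, (G.degree v + 1) := by
        rw [sum_add_distrib, sum_degrees_eq_twice_card_edges, sum_const, card_univ, smul_eq_mul,
          mul_one]
    _ = ∑ v ∈ S, (G.degree v + 1) + ∑ v ∈ Sᶜ, (G.degree v + 1) := (sum_add_sum_compl S _).symm
    _ = _ := by
      simp only [hdeg, sum_add_distrib]
      omega

lemma isLimitedPacking_compl_iff {k : ℕ} {S : Finset V} :
    G.IsLimitedPacking k Sᶜ ↔
      (∀ v ∉ S, #(G.neighborFinset v \ S) + 1 ≤ k) ∧ ∀ v ∈ S, #(G.neighborFinset v \ S) ≤ k := by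
  simp only [IsLimitedPacking, ← sdiff_eq_inter_compl]
  refine ⟨fun h => ⟨fun v hv => ?_, fun v hv => ?_⟩, fun ⟨hout, hin⟩ v => ?_⟩
  · simpa [insert_sdiff_of_notMem _ hv] using h v
  · simpa [insert_sdiff_of_mem _ hv] using h v
  · by_cases hv : v ∈ S
    · simpa [insert_sdiff_of_mem _ hv] using hin v hv
    · simpa [insert_sdiff_of_notMem _ hv] using hout v hv

lemma neighborFinset_inter_subset_erase (s : Finset V) (v : V) :
    G.neighborFinset v ∩ s ⊆ s.erase v := fun w hw =>
  mem_erase.2 ⟨by rintro rfl; exact G.notMem_neighborFinset_self _ (mem_of_mem_inter_left hw),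
    mem_of_mem_inter_right hw⟩

lemma card_neighborFinset_inter_add_one_le {s : Finset V} {v : V} (hv : v ∈ s) :
    #(G.neighborFinset v ∩ s) + 1 ≤ #s := by
  rw [← card_erase_add_one hv]
  exact Nat.add_le_add_right (card_le_card (G.neighborFinset_inter_subset_erase s v)) 1

lemma isClique_iff_forall_card_neighborFinset_inter_add_one_eq {s : Finset V} :
    G.IsClique (s : Set V) ↔ ∀ v ∈ s, #(G.neighborFinset v ∩ s) + 1 = #s := by
  refine ⟨fun h v hv => ?_, fun h v hv w hw hvw => ?_⟩
  · have heq : G.neighborFinset v ∩ s = s.erase v :=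
      (G.neighborFinset_inter_subset_erase s v).antisymm fun w hw =>
        mem_inter.2 ⟨(G.mem_neighborFinset v w).2 (h hv (mem_of_mem_erase hw)
          (ne_of_mem_erase hw).symm), mem_of_mem_erase hw⟩
    rw [heq, card_erase_add_one hv]
  · have heq : G.neighborFinset v ∩ s = s.erase v :=
      eq_of_subset_of_card_le (G.neighborFinset_inter_subset_erase s v)
        (by have := h v hv; rw [card_erase_of_mem hv]; omega)
    have hw' : w ∈ G.neighborFinset v ∩ s := heq ▸ mem_erase.2 ⟨hvw.symm, hw⟩
    exact (G.mem_neighborFinset v w).1 (mem_of_mem_inter_left hw')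

variable {G} in
lemma IsLimitedPacking.two_mul_card_edgeFinset_add_card_le {k : ℕ} {S : Finset V}
    (h : G.IsLimitedPacking k Sᶜ) :
    2 * #G.edgeFinset + Fintype.card V ≤ #Sᶜ * k + 2 * (#S * k) + #S * #S := by
  obtain ⟨hout, hin⟩ := G.isLimitedPacking_compl_iff.1 h
  have h₁ := sum_le_sum fun v hv => hout v (mem_compl.1 hv)
  have h₂ := sum_le_sum hin
  have h₃ := sum_le_sum fun v hv => G.card_neighborFinset_inter_add_one_le (s := S) hv
  simp only [sum_const, smul_eq_mul] at h₁ h₂ h₃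
  rw [G.two_mul_card_edgeFinset_add_card_eq S]
  omega

variable {G} in
lemma IsLimitedPacking.two_mul_card_edgeFinset_add_card_eq_iff {k : ℕ} {S : Finset V}
    (h : G.IsLimitedPacking k Sᶜ) :
    2 * #G.edgeFinset + Fintype.card V = #Sᶜ * k + 2 * (#S * k) + #S * #S ↔
      G.IsClique (S : Set V) ∧ (∀ v ∉ S, #(G.neighborFinset v \ S) + 1 = k) ∧
        ∀ v ∈ S, #(G.neighborFinset v \ S) = k := by
  obtain ⟨hout, hin⟩ := G.isLimitedPacking_compl_iff.1 h
  have hout' : ∀ v ∈ Sᶜ, #(G.neighborFinset v \ S) + 1 ≤ k :=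
    fun v hv => hout v (mem_compl.1 hv)
  have hclique := fun v (hv : v ∈ S) => G.card_neighborFinset_inter_add_one_le hv
  have h₁ := sum_le_sum hout'
  have h₂ := sum_le_sum hin
  have h₃ := sum_le_sum hclique
  have e₁ := sum_eq_sum_iff_of_le hout'
  have e₂ := sum_eq_sum_iff_of_le hin
  have e₃ := sum_eq_sum_iff_of_le hclique
  simp only [sum_const, smul_eq_mul, mem_compl] at h₁ h₂ h₃ e₁ e₂ e₃
  rw [G.two_mul_card_edgeFinset_add_card_eq S,
    isClique_iff_forall_card_neighborFinset_inter_add_one_eq, ← e₁, ← e₂, ← e₃]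
  omega

noncomputable def limitedPackingDiscriminant (k : ℕ) : ℝ :=
  (k : ℝ) ^ 2 / 4 + (1 - k) * Fintype.card V + 2 * #G.edgeFinset

noncomputable def limitedPackingBound (k : ℕ) : ℝ :=
  Fintype.card V + k / 2 - √(G.limitedPackingDiscriminant k)

lemma sq_card_add_half_sub_limitedPackingDiscriminant (S : Finset V) (k : ℕ) :
    ((#S : ℝ) + k / 2) ^ 2 - G.limitedPackingDiscriminant k =
      ((#Sᶜ * k + 2 * (#S * k) + #S * #S : ℕ) : ℝ) -
        ((2 * #G.edgeFinset + Fintype.card V : ℕ) : ℝ) := by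
  have hcard : (#S : ℝ) + #Sᶜ = Fintype.card V := by exact_mod_cast card_add_card_compl S
  rw [limitedPackingDiscriminant]
  push_cast
  rw [← hcard]
  ring

variable {G} in
lemma IsLimitedPacking.card_le_limitedPackingBound {k : ℕ} {B : Finset V}
    (h : G.IsLimitedPacking k B) : (#B : ℝ) ≤ G.limitedPackingBound k := by
  obtain ⟨S, rfl⟩ : ∃ S : Finset V, B = Sᶜ := ⟨Bᶜ, (compl_compl B).symm⟩
  have hcard : (#Sᶜ : ℝ) + #S = Fintype.card V := by exact_mod_cast card_compl_add_card S
  have hnat : ((2 * #G.edgeFinset + Fintype.card V : ℕ) : ℝ) ≤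
      ((#Sᶜ * k + 2 * (#S * k) + #S * #S : ℕ) : ℝ) :=
    Nat.cast_le.2 h.two_mul_card_edgeFinset_add_card_le
  have hsqrt : √(G.limitedPackingDiscriminant k) ≤ #S + k / 2 := by
    rw [Real.sqrt_le_left (by positivity)]
    linarith [G.sq_card_add_half_sub_limitedPackingDiscriminant S k]
  rw [limitedPackingBound]
  linarith

variable {G} in
lemma IsLimitedPacking.card_compl_eq_limitedPackingBound_iff {k : ℕ} {S : Finset V}
    (hk : 1 ≤ k) (h : G.IsLimitedPacking k Sᶜ) :
    (#Sᶜ : ℝ) = G.limitedPackingBound k ↔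
      G.IsClique (S : Set V) ∧ (∀ v ∉ S, #(G.neighborFinset v \ S) = k - 1) ∧
        ∀ v ∈ S, #(G.neighborFinset v \ S) = k := by
  have hcard : (#Sᶜ : ℝ) + #S = Fintype.card V := by exact_mod_cast card_compl_add_card S
  have hpos : (0 : ℝ) < #S + k / 2 := by
    have : (1 : ℝ) ≤ k := by exact_mod_cast hk
    positivity
  have hsq := G.sq_card_add_half_sub_limitedPackingDiscriminant S k
  have hk' (a : ℕ) : a + 1 = k ↔ a = k - 1 := by omega
  calc (#Sᶜ : ℝ) = G.limitedPackingBound k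
        ↔ √(G.limitedPackingDiscriminant k) = #S + k / 2 := by
        rw [limitedPackingBound]
        constructor <;> intro <;> linarith
    -- `#S + k / 2 > 0` also rules out a negative discriminant, whose `√` is `0`.
    _ ↔ ((#S : ℝ) + k / 2) * (#S + k / 2) = G.limitedPackingDiscriminant k :=
        Real.sqrt_eq_iff_mul_self_eq_of_pos hpos
    _ ↔ 2 * #G.edgeFinset + Fintype.card V = #Sᶜ * k + 2 * (#S * k) + #S * #S := by
        rw [← sq, ← Nat.cast_inj (R := ℝ)]
        constructor <;> intro <;> linarith
    _ ↔ _ := by rw [h.two_mul_card_edgeFinset_add_card_eq_iff]; simp only [hk']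

end SimpleGraph

theorem limited_packing_upper_bound_eq_iff_general {V : Type*} [Fintype V] [DecidableEq V]
    (G : SimpleGraph V) [DecidableRel G.Adj] (k n m : ℕ)
    (hk1 : 1 ≤ k)
    (hn : n = Fintype.card V) (hm : m = G.edgeFinset.card) :
    (G.limitedPackingNumber k : ℝ) =
      n + k / 2 - Real.sqrt ((k : ℝ) ^ 2 / 4 + (1 - (k : ℝ)) * n + 2 * m) ↔
    ∃ S : Finset V, G.IsClique ↑S ∧
      (∀ v ∉ S, ((G.neighborFinset v) \ S).card = k - 1) ∧
      (∀ v ∈ S, ((G.neighborFinset v) \ S).card = k) := by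
  subst hn hm
  change (_ : ℝ) = G.limitedPackingBound k ↔ _
  obtain ⟨B, hB, hBcard⟩ := G.exists_isLimitedPacking_card_eq_limitedPackingNumber k
  constructor
  · intro hL
    rw [← compl_compl B] at hB hBcard
    exact ⟨Bᶜ, (hB.card_compl_eq_limitedPackingBound_iff hk1).1 (hBcard ▸ hL)⟩
  · rintro ⟨S, hS⟩
    have hSc : G.IsLimitedPacking k Sᶜ := G.isLimitedPacking_compl_iff.2
      ⟨fun v hv => by rw [hS.2.1 v hv]; omega, fun v hv => (hS.2.2 v hv).le⟩
    refine le_antisymm ?_ ?_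
    · exact hBcard ▸ hB.card_le_limitedPackingBound
    · rw [← (hSc.card_compl_eq_limitedPackingBound_iff hk1).2 hS]
      exact_mod_cast hSc.card_le_limitedPackingNumber

/-- Characterization of equality in the upper bound
`L_k(G) ≤ n + k/2 - √(k²/4 + (1-k)n + 2m)`: equality holds iff there is a clique `S`
such that the induced subgraph on the complement of `S` is `(k-1)`-regular and every
vertex of `S` has exactly `k` neighbours outside `S`. -/
theorem limited_packing_upper_bound_eq_iff {V : Type*} [Fintype V] [DecidableEq V]
    (G : SimpleGraph V) [DecidableRel G.Adj] (k n m : ℕ)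
    (hk1 : 1 ≤ k) (hk2 : k ≤ G.maxDegree)
    (hn : n = Fintype.card V) (hm : m = G.edgeFinset.card)
    (hcond : (k : ℝ) ≤ 2 * ((n : ℝ) - Real.sqrt ((n : ℝ) ^ 2 - n - 2 * m)) ∨
      k - 1 ≤ G.minDegree) :
    (G.limitedPackingNumber k : ℝ) =
      n + k / 2 - Real.sqrt ((k : ℝ) ^ 2 / 4 + (1 - (k : ℝ)) * n + 2 * m) ↔
    ∃ S : Finset V, G.IsClique ↑S ∧
      (∀ v ∉ S, ((G.neighborFinset v) \ S).card = k - 1) ∧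
      (∀ v ∈ S, ((G.neighborFinset v) \ S).card = k) :=
  limited_packing_upper_bound_eq_iff_general G k n m hk1 hn hm
end

section
/- Let G be a finite simple graph of order n and size m with no isolated vertex. Then ρₒ(G) ≤ n − √(2m − n). -/
/-!
Let `B` be a maximum open packing, `ρ = |B|`. The neighbourhoods of the vertices of `B` are
pairwise disjoint, so their degrees sum to at most `n`. A vertex outside `B` has at most one
neighbour in `B` (two would share it as a common neighbour), so its degree is at most
`(n - ρ - 1) + 1`. Summing, `2m ≤ n + (n - ρ)²`, i.e. `ρ ≤ n - √(2m - n)`.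
-/

open Finset

/-- A set `B` is an open packing in `G` if distinct vertices of `B`
have disjoint open neighbourhoods. -/
def SimpleGraph.IsOpenPacking {V : Type*} (G : SimpleGraph V) (B : Finset V) : Prop :=
  ∀ u ∈ B, ∀ v ∈ B, u ≠ v → G.neighborSet u ∩ G.neighborSet v = ∅

/-- The open packing number of `G`. -/
noncomputable def SimpleGraph.openPackingNumber {V : Type*} [Fintype V]
    (G : SimpleGraph V) : ℕ :=
  sSup {n : ℕ | ∃ B : Finset V, G.IsOpenPacking B ∧ B.card = n}

namespace SimpleGraph

variable {V : Type*} {G : SimpleGraph V}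

theorem exists_isOpenPacking_card_eq_openPackingNumber [Fintype V] :
    ∃ B : Finset V, G.IsOpenPacking B ∧ #B = G.openPackingNumber := by
  have hbdd : BddAbove {k | ∃ B : Finset V, G.IsOpenPacking B ∧ #B = k} :=
    ⟨Fintype.card V, by rintro k ⟨B, -, rfl⟩; exact B.card_le_univ⟩
  refine Nat.sSup_mem ?_ hbdd
  exact ⟨0, ∅, by simp [IsOpenPacking], card_empty⟩

namespace IsOpenPacking

variable {B : Finset V}

theorem disjoint_neighborSet (hB : G.IsOpenPacking B) {u v : V} (hu : u ∈ B) (hv : v ∈ B)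
    (huv : u ≠ v) : Disjoint (G.neighborSet u) (G.neighborSet v) :=
  Set.disjoint_iff_inter_eq_empty.2 (hB u hu v hv huv)

theorem card_neighborFinset_inter_le_one [DecidableEq V] (hB : G.IsOpenPacking B) (v : V)
    [Fintype (G.neighborSet v)] : #(G.neighborFinset v ∩ B) ≤ 1 := by
  refine card_le_one.2 fun a ha b hb => by_contra fun hab => ?_
  simp only [mem_inter, mem_neighborFinset] at ha hb
  exact Set.disjoint_left.1 (hB.disjoint_neighborSet ha.2 hb.2 hab) (G.adj_symm ha.1)
    (G.adj_symm hb.1)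

theorem sum_degree_le_card [Fintype V] [G.LocallyFinite] (hB : G.IsOpenPacking B) :
    ∑ b ∈ B, G.degree b ≤ Fintype.card V := by
  classical
  have hdisj : (B : Set V).PairwiseDisjoint fun v => G.neighborFinset v := fun u hu v hv huv => by
    simpa only [← coe_neighborFinset, disjoint_coe] using hB.disjoint_neighborSet hu hv huv
  simpa only [card_neighborFinset_eq_degree, card_biUnion hdisj] using
    card_le_univ (B.biUnion fun v => G.neighborFinset v)

theorem degree_le_card_sub_card [Fintype V] [G.LocallyFinite] (hB : G.IsOpenPacking B) {v : V}
    (hv : v ∉ B) : G.degree v ≤ Fintype.card V - #B := by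
  classical
  have houtside : #(G.neighborFinset v \ B) ≤ Fintype.card V - #(insert v B) := by
    rw [← card_compl]
    refine card_le_card fun x hx => ?_
    simp only [mem_sdiff, mem_neighborFinset, mem_compl, mem_insert, not_or] at hx ⊢
    exact ⟨(G.ne_of_adj hx.1).symm, hx.2⟩
  have hinside := hB.card_neighborFinset_inter_le_one v
  have hinsert : #(insert v B) = #B + 1 := card_insert_of_notMem hv
  have hle : #(insert v B) ≤ Fintype.card V := card_le_univ _
  rw [← card_neighborFinset_eq_degree, ← card_sdiff_add_card_inter _ B]
  omega

theorem two_mul_card_edgeFinset_le [Fintype V] [DecidableRel G.Adj] (hB : G.IsOpenPacking B) :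
    2 * #G.edgeFinset ≤ Fintype.card V + (Fintype.card V - #B) ^ 2 := by
  classical
  have houtside : ∑ v ∈ Bᶜ, G.degree v ≤ (Fintype.card V - #B) ^ 2 := by
    calc ∑ v ∈ Bᶜ, G.degree v ≤ ∑ _v ∈ Bᶜ, (Fintype.card V - #B) :=
          sum_le_sum fun v hv => hB.degree_le_card_sub_card (mem_compl.1 hv)
      _ = (Fintype.card V - #B) ^ 2 := by rw [sum_const, card_compl, smul_eq_mul, sq]
  rw [← sum_degrees_eq_twice_card_edges, ← sum_add_sum_compl B]
  exact add_le_add hB.sum_degree_le_card houtside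

end IsOpenPacking

end SimpleGraph

theorem open_packing_upper_bound_general {V : Type*} [Fintype V]
    (G : SimpleGraph V) [DecidableRel G.Adj] (n m : ℕ)
    (hn : n = Fintype.card V) (hm : m = G.edgeFinset.card) :
    (G.openPackingNumber : ℝ) ≤ n - Real.sqrt (2 * m - n) := by
  obtain ⟨B, hB, hcard⟩ := G.exists_isOpenPacking_card_eq_openPackingNumber
  have hρn : G.openPackingNumber ≤ n := hn ▸ hcard ▸ B.card_le_univ
  have hedges : 2 * m ≤ n + (n - G.openPackingNumber) ^ 2 :=
    hn ▸ hm ▸ hcard ▸ hB.two_mul_card_edgeFinset_le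
  have hedges_real : 2 * (m : ℝ) - n ≤ ((n : ℝ) - G.openPackingNumber) ^ 2 := by
    have := (Nat.cast_le (α := ℝ)).2 hedges
    push_cast [Nat.cast_sub hρn] at this
    linarith
  have hsqrt : Real.sqrt (2 * m - n) ≤ n - G.openPackingNumber :=
    (Real.sqrt_le_left (sub_nonneg.2 (Nat.cast_le.2 hρn))).2 hedges_real
  linarith

/-- Upper bound on the open packing number in terms of order `n` and size `m` for graphs
with no isolated vertex. -/
theorem open_packing_upper_bound {V : Type*} [Fintype V] [DecidableEq V]
    (G : SimpleGraph V) [DecidableRel G.Adj] (n m : ℕ)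
    (hn : n = Fintype.card V) (hm : m = G.edgeFinset.card)
    (hiso : ∀ v : V, 0 < G.degree v) :
    (G.openPackingNumber : ℝ) ≤ n - Real.sqrt (2 * m - n) :=
  open_packing_upper_bound_general G n m hn hm
end

section
/- Let G be a finite simple graph of order n with δ(G) ≥ 2. Then γ×₂(G) + ρ(G) ≤ n − δ(G) + 2. -/
/-!
Take a maximum packing `B` and enlarge it by `δ(G) - 2` further vertices to a set `R`. A closed
neighbourhood has at least `δ(G) + 1` vertices and meets `B` in at most one of them, so it meets
`R` in at most `δ(G) - 1` vertices and keeps two vertices outside `R`. Hence `V \ R` is double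
dominating, of size `n - ρ(G) - δ(G) + 2`.
-/

open Finset

/-- A set `B` is a packing in `G` if distinct vertices of `B` have disjoint
closed neighbourhoods. -/
def SimpleGraph.IsPacking {V : Type*} [Fintype V] [DecidableEq V]
    (G : SimpleGraph V) [DecidableRel G.Adj] (B : Finset V) : Prop :=
  ∀ u ∈ B, ∀ v ∈ B, u ≠ v →
    (insert u (G.neighborFinset u)) ∩ (insert v (G.neighborFinset v)) = ∅

/-- The packing number of `G`. -/
noncomputable def SimpleGraph.packingNumber {V : Type*} [Fintype V] [DecidableEq V]
    (G : SimpleGraph V) [DecidableRel G.Adj] : ℕ :=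
  sSup {n : ℕ | ∃ B : Finset V, G.IsPacking B ∧ B.card = n}

/-- A set `D` is a double dominating set in `G` if every closed neighbourhood
contains at least two vertices of `D`. -/
def SimpleGraph.IsDoubleDominating {V : Type*} [Fintype V] [DecidableEq V]
    (G : SimpleGraph V) [DecidableRel G.Adj] (D : Finset V) : Prop :=
  ∀ v : V, 2 ≤ ((insert v (G.neighborFinset v)) ∩ D).card

/-- The double domination number of `G`. -/
noncomputable def SimpleGraph.doubleDominationNumber {V : Type*} [Fintype V] [DecidableEq V]
    (G : SimpleGraph V) [DecidableRel G.Adj] : ℕ :=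
  sInf {n : ℕ | ∃ D : Finset V, G.IsDoubleDominating D ∧ D.card = n}

namespace SimpleGraph

variable {V : Type*} [Fintype V] [DecidableEq V] {G : SimpleGraph V} [DecidableRel G.Adj]
  {B R : Finset V}

lemma mem_closedNeighborhood_comm {u v : V} :
    u ∈ insert v (G.neighborFinset v) ↔ v ∈ insert u (G.neighborFinset u) := by
  simp only [mem_insert, mem_neighborFinset, eq_comm, G.adj_comm]

lemma IsPacking.eq_of_mem_closedNeighborhood (hB : G.IsPacking B) {u w v : V} (hu : u ∈ B)
    (hw : w ∈ B) (hvu : v ∈ insert u (G.neighborFinset u))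
    (hvw : v ∈ insert w (G.neighborFinset w)) : u = w := by
  by_contra huw
  have hv := mem_inter.mpr ⟨hvu, hvw⟩
  rw [hB u hu w hw huw] at hv
  exact notMem_empty v hv

lemma IsPacking.card_closedNeighborhood_inter_le_one (hB : G.IsPacking B) (v : V) :
    #(insert v (G.neighborFinset v) ∩ B) ≤ 1 := by
  refine card_le_one.mpr fun u hu w hw => ?_
  rw [mem_inter, mem_closedNeighborhood_comm] at hu hw
  exact hB.eq_of_mem_closedNeighborhood hu.2 hw.2 hu.1 hw.1

lemma IsPacking.disjoint_neighborFinset (hB : G.IsPacking B) {b : V} (hb : b ∈ B) :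
    Disjoint B (G.neighborFinset b) := by
  refine Finset.disjoint_left.mpr fun x hx hxb => ?_
  have hbx : b = x :=
    hB.eq_of_mem_closedNeighborhood hb hx (mem_insert_of_mem hxb) (mem_insert_self x _)
  exact G.irrefl (hbx ▸ (G.mem_neighborFinset b x).mp hxb)

lemma IsPacking.card_add_minDegree_le [Nonempty V] (hB : G.IsPacking B) :
    #B + G.minDegree ≤ Fintype.card V := by
  obtain rfl | ⟨b, hb⟩ := B.eq_empty_or_nonempty
  · simpa using G.minDegree_lt_card.le
  calc #B + G.minDegree ≤ #B + #(G.neighborFinset b) := by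
        rw [card_neighborFinset_eq_degree]
        exact Nat.add_le_add_left (G.minDegree_le_degree b) _
    _ = #(B ∪ G.neighborFinset b) := (card_union_of_disjoint (hB.disjoint_neighborFinset hb)).symm
    _ ≤ Fintype.card V := card_le_univ _

lemma IsPacking.isDoubleDominating_univ_sdiff (hB : G.IsPacking B) (hBR : B ⊆ R)
    (hR : #R + 2 ≤ #B + G.minDegree) : G.IsDoubleDominating (univ \ R) := by
  intro v
  set N := insert v (G.neighborFinset v)
  have hN : G.minDegree + 1 ≤ #N := by
    rw [card_insert_of_notMem (by simp), card_neighborFinset_eq_degree]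
    exact Nat.add_le_add_right (G.minDegree_le_degree v) 1
  have hNR : #(N ∩ R) + #B ≤ 1 + #R := by
    have hsub : N ∩ R ⊆ (N ∩ B) ∪ (R \ B) := fun x hx => by
      simp only [mem_inter, mem_union, mem_sdiff] at hx ⊢
      tauto
    have hNB : #(N ∩ B) ≤ 1 := hB.card_closedNeighborhood_inter_le_one v
    have := (card_le_card hsub).trans (card_union_le _ _)
    have := card_sdiff_add_card_eq_card hBR
    omega
  have hsplit : #(N ∩ (univ \ R)) + #(N ∩ R) = #N := by
    rw [← inter_sdiff_assoc, inter_univ, card_sdiff_add_card_inter]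
  omega

lemma exists_isPacking_card_eq_packingNumber (G : SimpleGraph V) [DecidableRel G.Adj] :
    ∃ B, G.IsPacking B ∧ #B = G.packingNumber := by
  have hne : {n | ∃ B, G.IsPacking B ∧ #B = n}.Nonempty :=
    ⟨0, ∅, fun u hu => absurd hu (notMem_empty u), rfl⟩
  have hbdd : BddAbove {n | ∃ B, G.IsPacking B ∧ #B = n} :=
    ⟨Fintype.card V, fun _ ⟨B, _, hB⟩ => hB ▸ card_le_univ B⟩
  exact Nat.sSup_mem hne hbdd

lemma IsDoubleDominating.doubleDominationNumber_le {D : Finset V} (hD : G.IsDoubleDominating D) :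
    G.doubleDominationNumber ≤ #D :=
  Nat.sInf_le ⟨D, hD, rfl⟩

end SimpleGraph

/-- For every graph of order `n` with `δ(G) ≥ 2`, `γ×₂(G) + ρ(G) ≤ n - δ(G) + 2`. -/
theorem doubleDomination_add_packing_le {V : Type*} [Fintype V] [DecidableEq V]
    (G : SimpleGraph V) [DecidableRel G.Adj] (hδ : 2 ≤ G.minDegree) :
    G.doubleDominationNumber + G.packingNumber ≤ Fintype.card V - G.minDegree + 2 := by
  have : Nonempty V := by
    by_contra hV
    rw [not_nonempty_iff] at hV
    simp at hδ
  obtain ⟨B, hB, hBcard⟩ := G.exists_isPacking_card_eq_packingNumber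
  have hBn := hB.card_add_minDegree_le
  obtain ⟨R, hBR, -, hRcard⟩ := exists_subsuperset_card_eq (subset_univ B)
    (n := #B + G.minDegree - 2) (by omega) (by rw [card_univ]; omega)
  have hD := (hB.isDoubleDominating_univ_sdiff hBR (by omega)).doubleDominationNumber_le
  rw [card_univ_sdiff] at hD
  omega
end

section
/- Let G be a finite connected simple graph of order n ≥ 2 and let B be an open packing in G. Then (δ(G) − 1)|B| ≤ |[B, V(G) ∖ B]| ≤ n − |B|, where |[B, V(G) ∖ B]| denotes the number of edges of G with one endpoint in B and the other in V(G) ∖ B. -/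
open Finset

/-- The set of edges of `G` with one endpoint in `B` and the other in `V(G) \ B`. -/
noncomputable def SimpleGraph.crossEdges {V : Type*} [Fintype V] [DecidableEq V]
    (G : SimpleGraph V) [DecidableRel G.Adj] (B : Finset V) : Finset (Sym2 V) :=
  G.edgeFinset.filter (fun e => ∃ u ∈ B, ∃ v ∉ B, e = s(u, v))

/-!
Every vertex has at most one neighbour in an open packing `B`. Counting the edges between `B` and
its complement from the side of `B`, each `u ∈ B` has at most one neighbour inside `B`, hence at
least `δ(G) - 1` outside; counting them from the side of the complement, each outside vertex lies
on at most one of them.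
-/

namespace SimpleGraph

variable {V : Type*} {G : SimpleGraph V}

theorem IsOpenPacking.card_filter_adj_le_one [DecidableRel G.Adj] {B : Finset V}
    (hB : G.IsOpenPacking B) (w : V) : #{u ∈ B | G.Adj u w} ≤ 1 := by
  refine card_le_one.2 fun u hu v hv => by_contra fun huv => ?_
  rw [mem_filter] at hu hv
  have hw : w ∈ G.neighborSet u ∩ G.neighborSet v := ⟨hu.2, hv.2⟩
  rw [hB u hu.1 v hv.1 huv] at hw
  exact hw

variable [Fintype V] [DecidableEq V] [DecidableRel G.Adj]

theorem degree_eq_card_filter_adj_add_card_filter_adj_compl (B : Finset V) (u : V) :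
    G.degree u = #{v ∈ B | G.Adj u v} + #{v ∈ Bᶜ | G.Adj u v} := by
  rw [← card_union_of_disjoint (disjoint_compl_right.mono (filter_subset _ _) (filter_subset _ _)),
    ← filter_union, union_compl, ← card_neighborFinset_eq_degree, neighborFinset_eq_filter]

theorem card_crossEdges (B : Finset V) :
    #(G.crossEdges B) = ∑ u ∈ B, #{v ∈ Bᶜ | G.Adj u v} := by
  have hcross : G.crossEdges B = {p ∈ B ×ˢ Bᶜ | G.Adj p.1 p.2}.image (fun p => s(p.1, p.2)) := by
    ext e
    induction e using Sym2.ind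
    simp only [crossEdges, mem_filter, mem_edgeFinset, mem_edgeSet, mem_image, mem_product,
      mem_compl, Sym2.eq_iff, Prod.exists]
    grind [G.adj_comm]
  rw [hcross, card_image_of_injOn, card_filter, sum_product]
  · simp_rw [← card_filter]
  · rintro ⟨u, v⟩ huv ⟨u', v'⟩ huv' h
    simp only [coe_filter, mem_product, mem_compl, Set.mem_ofPred_eq, Sym2.eq_iff] at huv huv' h
    grind

theorem card_crossEdges_eq_sum_compl (B : Finset V) :
    #(G.crossEdges B) = ∑ v ∈ Bᶜ, #{u ∈ B | G.Adj u v} :=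
  (card_crossEdges B).trans (sum_card_bipartiteAbove_eq_sum_card_bipartiteBelow G.Adj)

namespace IsOpenPacking

variable {B : Finset V}

theorem minDegree_sub_one_le_card_filter_adj_compl (hB : G.IsOpenPacking B) (u : V) :
    G.minDegree - 1 ≤ #{v ∈ Bᶜ | G.Adj u v} := by
  have hinside : #{v ∈ B | G.Adj u v} ≤ 1 := by
    simpa only [G.adj_comm u] using hB.card_filter_adj_le_one u
  have hdeg := G.minDegree_le_degree u
  rw [G.degree_eq_card_filter_adj_add_card_filter_adj_compl B u] at hdeg
  omega

theorem minDegree_sub_one_mul_card_le_card_crossEdges (hB : G.IsOpenPacking B) :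
    (G.minDegree - 1) * #B ≤ #(G.crossEdges B) := by
  rw [card_crossEdges, mul_comm, ← smul_eq_mul, ← sum_const]
  exact sum_le_sum fun u _ => hB.minDegree_sub_one_le_card_filter_adj_compl u

theorem card_crossEdges_le_card_sub_card (hB : G.IsOpenPacking B) :
    #(G.crossEdges B) ≤ Fintype.card V - #B := by
  rw [card_crossEdges_eq_sum_compl, ← card_compl]
  simpa using sum_le_sum fun v (_ : v ∈ Bᶜ) => hB.card_filter_adj_le_one v

end IsOpenPacking

end SimpleGraph

theorem open_packing_cross_edge_bounds_general {V : Type*} [Fintype V] [DecidableEq V]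
    (G : SimpleGraph V) [DecidableRel G.Adj]
    (B : Finset V) (hB : G.IsOpenPacking B) :
    (G.minDegree - 1) * B.card ≤ (G.crossEdges B).card ∧
    (G.crossEdges B).card ≤ Fintype.card V - B.card :=
  ⟨hB.minDegree_sub_one_mul_card_le_card_crossEdges, hB.card_crossEdges_le_card_sub_card⟩

/-- If `G` is connected of order `n ≥ 2` and `B` is an open packing in `G`, then
`(δ(G) - 1)|B| ≤ |[B, V(G) \ B]| ≤ n - |B|`. -/
theorem open_packing_cross_edge_bounds {V : Type*} [Fintype V] [DecidableEq V]
    (G : SimpleGraph V) [DecidableRel G.Adj]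
    (hconn : G.Connected) (hn : 2 ≤ Fintype.card V)
    (B : Finset V) (hB : G.IsOpenPacking B) :
    (G.minDegree - 1) * B.card ≤ (G.crossEdges B).card ∧
    (G.crossEdges B).card ≤ Fintype.card V - B.card :=
  open_packing_cross_edge_bounds_general G B hB
end
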